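/- For the Zak-OTFS basis φ_i[n] = (1/√N)·e^{(2πi/N)·⌊i/M⌋·⌊n/M⌋}·1{n ≡ i (mod M)} on Z_{MN}, the self-ambiguity function A_{φ_i}[k,l] = ∑_{n=0}^{MN−1} φ_i[n]·conj(φ_i[(n−k) mod MN])·e^{−(2πi/(MN))·l·(n−k)} is independent of i for all k ∈ {0,…,M−1} and l ∈ {0,…,N−1}: A_{φ_i}[k,l] = A_{φ_j}[k,l] for all i, j ∈ {0,…,MN−1}. -/

import Mathlib

/-!
`φ_i` lives on the residue class `n ≡ i (mod M)`, where `|φ_i|² = 1/N`. For `0 < k < M` the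
supports of `φ_i` and of its shift by `k` are disjoint, so `A_{φ_i}[k, l] = 0`. For `k = 0` the
ambiguity function is `1/N` times a sum of `(MN)`-th roots of unity over the residue class, i.e. a
geometric sum of the `N`-th root of unity `e^{-2πi l/N}`, which is `N·δ[l]`. Hence
`A_{φ_i}[k, l] = δ[k] δ[l]` for every `i`.
-/

open Complex Finset

/-- The Zak-OTFS basis element on `Z_{MN}`. -/
noncomputable def zakBasis (M N i n : ℕ) : ℂ :=
  if n % M = i % M then
    (1 / Real.sqrt N) *
      Complex.exp (2 * Real.pi * Complex.I * ((i / M : ℕ) * (n / M : ℕ) : ℕ) / N)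
  else 0

/-- Discrete self-ambiguity function of the `i`-th Zak-OTFS basis vector,
with `(n − k) mod MN` realized as `(n + MN − k) % (MN)`. -/
noncomputable def zakAmbiguity (M N : ℕ) (i k l : ℕ) : ℂ :=
  ∑ n ∈ Finset.range (M * N),
    zakBasis M N i n * (starRingEnd ℂ) (zakBasis M N i ((n + M * N - k) % (M * N))) *
      Complex.exp (-(2 * Real.pi * Complex.I) * l * ((n : ℤ) - (k : ℤ)) / (M * N))

open ComplexConjugate

theorem Finset.sum_range_mul_ite_mod_eq {β : Type*} [AddCommMonoid β] {M r : ℕ} (hr : r < M)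
    (N : ℕ) (f : ℕ → β) :
    ∑ n ∈ range (M * N), (if n % M = r then f n else 0) = ∑ m ∈ range N, f (M * m + r) := by
  induction N with
  | zero => simp
  | succ N ih =>
    rw [Nat.mul_succ, sum_range_add, ih, sum_range_succ]
    congr 1
    rw [sum_congr rfl fun s hs => by rw [Nat.mul_add_mod, Nat.mod_eq_of_lt (mem_range.mp hs)]]
    simp [hr]

theorem IsPrimitiveRoot.geom_sum_pow_eq_ite {K : Type*} [Field K] {ζ : K} {N l : ℕ}
    (hζ : IsPrimitiveRoot ζ N) (hl : l < N) :
    ∑ m ∈ range N, (ζ ^ l) ^ m = if l = 0 then (N : K) else 0 := by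
  split_ifs with hl0
  · simp [hl0]
  · rw [geom_sum_eq (hζ.pow_ne_one_of_pos_of_lt hl0 hl), pow_right_comm, hζ.pow_eq_one, one_pow,
      sub_self, zero_div]

theorem IsPrimitiveRoot.sum_range_mul_ite_mod_eq_pow {K : Type*} [Field K] {ζ : K} {M N l r : ℕ}
    (hζ : IsPrimitiveRoot ζ (M * N)) (hl : l < N) (hr : r < M) :
    ∑ n ∈ range (M * N), (if n % M = r then (ζ ^ l) ^ n else 0) = if l = 0 then (N : K) else 0 := by
  have hζM : IsPrimitiveRoot (ζ ^ M) N := hζ.pow (Nat.mul_pos (by omega) (by omega)) rfl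
  simp_rw [sum_range_mul_ite_mod_eq hr, pow_add, pow_mul, ← sum_mul, pow_right_comm ζ l M,
    hζM.geom_sum_pow_eq_ite hl]
  split_ifs with hl0 <;> simp [hl0]

theorem Nat.eq_zero_of_sub_mod_mod_eq {M c n k : ℕ} (hc : M ∣ c) (hk : k < M) (hkn : k ≤ n + c)
    (h : (n + c - k) % c % M = n % M) : k = 0 := by
  rw [Nat.mod_mod_of_dvd _ hc] at h
  have hshift : n + k ≡ n + 0 [MOD M] := calc
    n + k ≡ n + c - k + k [MOD M] := (Nat.ModEq.add_right k h).symm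
    _ = n + c := Nat.sub_add_cancel hkn
    _ ≡ n + 0 [MOD M] := Nat.ModEq.add_left n (Nat.modEq_zero_iff_dvd.mpr hc)
  exact Nat.eq_zero_of_dvd_of_lt (Nat.modEq_zero_iff_dvd.mp (Nat.ModEq.add_left_cancel' n hshift)) hk

theorem zakBasis_mul_conj (M N i n : ℕ) :
    zakBasis M N i n * conj (zakBasis M N i n) = if n % M = i % M then (N : ℂ)⁻¹ else 0 := by
  unfold zakBasis
  split_ifs
  · rw [Complex.mul_conj, Complex.normSq_eq_norm_sq, norm_mul, Complex.norm_exp]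
    simp
  · simp

theorem zakAmbiguity_eq_zero_of_pos {M N i k : ℕ} (hk0 : 0 < k) (hk : k < M) (l : ℕ) :
    zakAmbiguity M N i k l = 0 := by
  refine sum_eq_zero fun n hn => ?_
  have hkn : k ≤ n + M * N := by
    have : M ≤ M * N := Nat.le_mul_of_pos_right M (Nat.pos_of_ne_zero (by rintro rfl; simp at hn))
    omega
  by_cases h1 : n % M = i % M
  · have h2 : (n + M * N - k) % (M * N) % M ≠ i % M := fun h2 =>
      hk0.ne' (Nat.eq_zero_of_sub_mod_mod_eq (dvd_mul_right M N) hk hkn (h2.trans h1.symm))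
    simp only [zakBasis, if_neg h2, map_zero, mul_zero, zero_mul]
  · simp [zakBasis, h1]

theorem zakAmbiguity_zero_left {M N : ℕ} (hM : 0 < M) (i : ℕ) {l : ℕ} (hl : l < N) :
    zakAmbiguity M N i 0 l = if l = 0 then 1 else 0 := by
  have hρ : IsPrimitiveRoot (exp (2 * Real.pi * I / (M * N)))⁻¹ (M * N) := by
    simpa using (Complex.isPrimitiveRoot_exp (M * N) (Nat.mul_pos hM (by omega)).ne').inv
  calc zakAmbiguity M N i 0 l
      = (N : ℂ)⁻¹ * ∑ n ∈ range (M * N),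
          if n % M = i % M then ((exp (2 * Real.pi * I / (M * N)))⁻¹ ^ l) ^ n else 0 := by
        rw [zakAmbiguity, mul_sum]
        refine sum_congr rfl fun n hn => ?_
        rw [Nat.sub_zero, Nat.add_mod_right, Nat.mod_eq_of_lt (mem_range.mp hn),
          zakBasis_mul_conj]
        split_ifs
        · rw [← exp_neg, ← pow_mul, ← exp_nat_mul]
          congr 2
          push_cast
          ring
        · simp
    _ = if l = 0 then 1 else 0 := by
        rw [hρ.sum_range_mul_ite_mod_eq_pow hl (Nat.mod_lt i hM)]
        split_ifs
        · exact inv_mul_cancel₀ (Nat.cast_ne_zero.mpr (by omega))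
        · simp

theorem zakAmbiguity_eq_ite {M N k l : ℕ} (hk : k < M) (hl : l < N) (i : ℕ) :
    zakAmbiguity M N i k l = if k = 0 ∧ l = 0 then 1 else 0 := by
  rcases Nat.eq_zero_or_pos k with rfl | hk0
  · simp [zakAmbiguity_zero_left (by omega) i hl]
  · simp [zakAmbiguity_eq_zero_of_pos hk0 hk, hk0.ne']

theorem zak_predictable_general (M N : ℕ) (k l : ℕ) (hk : k < M) (hl : l < N) :
    ∀ i j, i < M * N → j < M * N →
      zakAmbiguity M N i k l = zakAmbiguity M N j k l := by
  intro i j _ _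
  rw [zakAmbiguity_eq_ite hk hl, zakAmbiguity_eq_ite hk hl]

/-- Predictability of Zak-OTFS: the self-ambiguity function is independent of
the carrier index on the fundamental domain `k ∈ {0,…,M−1}`, `l ∈ {0,…,N−1}`. -/
theorem zak_predictable (M N : ℕ) (hM : 2 ≤ M) (hN : 0 < N)
    (k l : ℕ) (hk : k < M) (hl : l < N) :
    ∀ i j, i < M * N → j < M * N →
      zakAmbiguity M N i k l = zakAmbiguity M N j k l :=
  zak_predictable_general M N k l hk hl
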